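/- Let p be an odd prime and l, n ≥ 1 positive integers. Then there exists no generalized bent function f : Z_2^n → Z_{p^l}. -/

import Mathlib

/-!
If `|W_f|² ≡ 2ⁿ`, the Wiener–Khinchin identity for the Walsh transform makes the autocorrelation
`Σ_x ζ^{f(x) - f(x+z)}` vanish for every `z ≠ 0`. That is a vanishing sum of `2ⁿ` powers of a
primitive `p^l`-th root of unity, so the cyclotomic polynomial `Φ_{p^l}` divides
`Σ_x X^{f(x) - f(x+z)}`; evaluating at `1`, where `Φ_{p^l}(1)` is `p` (or `0` when `l = 0`),
gives `p ∣ 2ⁿ`.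
-/

open Finset

/-- The primitive `m`-th root of unity `e^{2πi/m}`. -/
noncomputable def zeta (m : ℕ) : ℂ := Complex.exp (2 * Real.pi * Complex.I / m)

/-- The inner product `x·y = Σ xᵢ yᵢ` in `Z₂`. -/
def bdot {n : ℕ} (x y : Fin n → ZMod 2) : ZMod 2 := ∑ i, x i * y i

/-- The Fourier coefficient `W_f(y) = Σ_x (-1)^{x·y} ζ_m^{f(x)}`. -/
noncomputable def Wf {n m : ℕ} (f : (Fin n → ZMod 2) → ZMod m) (y : Fin n → ZMod 2) : ℂ :=
  ∑ x : Fin n → ZMod 2, (-1 : ℂ) ^ (bdot x y).val * zeta m ^ (f x).val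

/-- `f : Z₂ⁿ → Z_m` is a generalized bent function of type `{m,n}` if
`|W_f(y)| = 2^{n/2}` for all `y`. -/
def IsGBF {n m : ℕ} (f : (Fin n → ZMod 2) → ZMod m) : Prop :=
  ∀ y : Fin n → ZMod 2, ‖Wf f y‖ = (2 : ℝ) ^ ((n : ℝ) / 2)

open ComplexConjugate

open Polynomial in
theorem prime_dvd_eval_one_cyclotomic_prime_pow {p : ℕ} (hp : p.Prime) (l : ℕ) :
    (p : ℤ) ∣ (cyclotomic (p ^ l) ℤ).eval 1 := by
  cases l with
  | zero => simp
  | succ k =>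
    have : Fact p.Prime := ⟨hp⟩
    rw [eval_one_cyclotomic_prime_pow]

open Polynomial in
theorem IsPrimitiveRoot.prime_dvd_card_of_sum_pow_eq_zero {K ι : Type*} [Field K] [CharZero K]
    {p l : ℕ} (hp : p.Prime) {ζ : K} (hζ : IsPrimitiveRoot ζ (p ^ l)) (s : Finset ι) (e : ι → ℕ)
    (hsum : ∑ i ∈ s, ζ ^ e i = 0) : p ∣ #s := by
  have hpos : 0 < p ^ l := pow_pos hp.pos l
  set P : ℤ[X] := ∑ i ∈ s, X ^ e i
  have hroot : aeval ζ P = 0 := by simpa [P] using hsum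
  obtain ⟨Q, hQ⟩ : cyclotomic (p ^ l) ℤ ∣ P := by
    rw [cyclotomic_eq_minpoly hζ hpos]
    exact minpoly.isIntegrallyClosed_dvd (hζ.isIntegral hpos) hroot
  have hP : P.eval 1 = #s := by simp [P, eval_finsetSum]
  have : (p : ℤ) ∣ #s := by
    rw [← hP, hQ, eval_mul]
    exact (prime_dvd_eval_one_cyclotomic_prime_pow hp l).mul_right _
  exact_mod_cast this

theorem pow_val_add_of_pow_eq_one {M : Type*} [Monoid M] {m : ℕ} [NeZero m] {ζ : M}
    (hζ : ζ ^ m = 1) (a b : ZMod m) : ζ ^ (a + b).val = ζ ^ a.val * ζ ^ b.val := by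
  rw [ZMod.val_add, ← pow_eq_pow_mod _ hζ, pow_add]

section Walsh

variable {n : ℕ}

theorem bdot_comm (x y : Fin n → ZMod 2) : bdot x y = bdot y x := by
  simp only [bdot, mul_comm]

theorem bdot_add_left (x x' y : Fin n → ZMod 2) : bdot (x + x') y = bdot x y + bdot x' y := by
  simp only [bdot, Pi.add_apply, add_mul, sum_add_distrib]

theorem bdot_single_left (i : Fin n) (y : Fin n → ZMod 2) : bdot (Pi.single i 1) y = y i := by
  simp [bdot, Pi.single_apply]

noncomputable def walshChar (x : Fin n → ZMod 2) : AddChar (Fin n → ZMod 2) ℂ where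
  toFun y := (-1) ^ (bdot x y).val
  map_zero_eq_one' := by simp [bdot]
  map_add_eq_mul' y y' := by
    rw [bdot_comm, bdot_add_left, pow_val_add_of_pow_eq_one neg_one_sq, bdot_comm y, bdot_comm y']

theorem walshChar_apply (x y : Fin n → ZMod 2) : walshChar x y = (-1) ^ (bdot x y).val := rfl

theorem walshChar_add (x x' y : Fin n → ZMod 2) :
    walshChar (x + x') y = walshChar x y * walshChar x' y := by
  simp only [walshChar_apply, bdot_add_left, pow_val_add_of_pow_eq_one neg_one_sq]

theorem walshChar_eq_zero_iff (x : Fin n → ZMod 2) : walshChar x = 0 ↔ x = 0 := by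
  constructor
  · intro hx
    funext i
    have h := DFunLike.congr_fun hx (Pi.single i 1)
    rw [walshChar_apply, bdot_comm, bdot_single_left, AddChar.zero_apply] at h
    have hsign : ∀ a : ZMod 2, (-1 : ℂ) ^ a.val = 1 → a = 0 := by
      intro a
      fin_cases a
      · intro; rfl
      · intro h
        norm_num [ZMod.val] at h
    exact hsign _ h
  · rintro rfl
    ext y
    simp [walshChar_apply, bdot]

theorem sum_walshChar (x : Fin n → ZMod 2) :
    ∑ y, walshChar x y = if x = 0 then (2 : ℂ) ^ n else 0 := by
  simp [AddChar.sum_eq_ite, walshChar_eq_zero_iff]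

noncomputable def walsh (g : (Fin n → ZMod 2) → ℂ) (y : Fin n → ZMod 2) : ℂ :=
  ∑ x, walshChar x y * g x

theorem sum_walshChar_mul_walsh_mul_conj (g : (Fin n → ZMod 2) → ℂ) (z : Fin n → ZMod 2) :
    ∑ y, walshChar z y * (walsh g y * conj (walsh g y)) =
      2 ^ n * ∑ x, g x * conj (g (x + z)) := by
  have hconj : ∀ x y : Fin n → ZMod 2, conj (walshChar x y) = walshChar x y := fun x y => by
    simp [walshChar_apply]
  have hexpand : ∀ y, walshChar z y * (walsh g y * conj (walsh g y)) =
      ∑ x, ∑ x', walshChar (x + x' + z) y * (g x * conj (g x')) := fun y => by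
    rw [walsh, map_sum, sum_mul_sum, mul_sum]
    refine sum_congr rfl fun x _ => ?_
    rw [mul_sum]
    refine sum_congr rfl fun x' _ => ?_
    rw [map_mul, hconj, walshChar_add, walshChar_add]
    ring
  have hdelta : ∀ x x' : Fin n → ZMod 2, x + x' + z = 0 ↔ x' = x + z := fun x x' => by
    rw [show x + x' + z = x' + (x + z) by abel, add_eq_zero_iff_eq_neg, ZModModule.neg_eq_self]
  calc ∑ y, walshChar z y * (walsh g y * conj (walsh g y))
      = ∑ x, ∑ x', (∑ y, walshChar (x + x' + z) y) * (g x * conj (g x')) := by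
        simp only [hexpand, sum_mul]
        rw [sum_comm]
        exact sum_congr rfl fun x _ => sum_comm
    _ = ∑ x, 2 ^ n * (g x * conj (g (x + z))) := by
        simp [sum_walshChar, hdelta, ite_mul]
    _ = 2 ^ n * ∑ x, g x * conj (g (x + z)) := (mul_sum ..).symm

end Walsh

theorem zeta_isPrimitiveRoot (m : ℕ) [NeZero m] : IsPrimitiveRoot (zeta m) m :=
  Complex.isPrimitiveRoot_exp m (NeZero.ne m)

section GeneralizedBent

theorem zeta_pow_val_mul_conj {m : ℕ} [NeZero m] (a b : ZMod m) :
    zeta m ^ a.val * conj (zeta m ^ b.val) = zeta m ^ (a - b).val := by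
  have hζ := zeta_isPrimitiveRoot m
  have hunit : zeta m ^ b.val * conj (zeta m ^ b.val) = 1 := by
    rw [Complex.mul_conj', norm_pow,
      Complex.norm_eq_one_of_pow_eq_one hζ.pow_eq_one (NeZero.ne m)]
    simp
  calc zeta m ^ a.val * conj (zeta m ^ b.val)
      = zeta m ^ (a - b).val * (zeta m ^ b.val * conj (zeta m ^ b.val)) := by
        rw [← mul_assoc, ← pow_val_add_of_pow_eq_one hζ.pow_eq_one, sub_add_cancel]
    _ = zeta m ^ (a - b).val := by rw [hunit, mul_one]

variable {n m : ℕ} {f : (Fin n → ZMod 2) → ZMod m}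

theorem Wf_eq_walsh : Wf f = walsh (fun x => zeta m ^ (f x).val) := rfl

theorem IsGBF.Wf_mul_conj (hf : IsGBF f) (y : Fin n → ZMod 2) :
    Wf f y * conj (Wf f y) = 2 ^ n := by
  rw [Complex.mul_conj', hf y, ← Complex.ofReal_pow, ← Real.rpow_mul_natCast zero_le_two]
  norm_num

theorem IsGBF.sum_zeta_pow_sub_eq_zero [NeZero m] (hf : IsGBF f) {z : Fin n → ZMod 2}
    (hz : z ≠ 0) : ∑ x, zeta m ^ (f x - f (x + z)).val = 0 := by
  have h := sum_walshChar_mul_walsh_mul_conj (fun x => zeta m ^ (f x).val) z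
  simp only [← Wf_eq_walsh, hf.Wf_mul_conj, ← sum_mul, sum_walshChar, if_neg hz, zero_mul,
    zeta_pow_val_mul_conj] at h
  exact (mul_eq_zero.mp h.symm).resolve_left (pow_ne_zero n two_ne_zero)

end GeneralizedBent

theorem stmt6_general {p l n : ℕ} (hp : p.Prime) (hodd : Odd p) (hn : 1 ≤ n) :
    ¬ ∃ f : (Fin n → ZMod 2) → ZMod (p ^ l), IsGBF f := by
  rintro ⟨f, hf⟩
  have : NeZero (p ^ l) := ⟨pow_ne_zero l hp.ne_zero⟩
  have : Nonempty (Fin n) := ⟨⟨0, hn⟩⟩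
  obtain ⟨z, hz⟩ := exists_ne (0 : Fin n → ZMod 2)
  have hdvd : p ∣ 2 ^ n := by
    simpa using (zeta_isPrimitiveRoot (p ^ l)).prime_dvd_card_of_sum_pow_eq_zero hp univ _
      (hf.sum_zeta_pow_sub_eq_zero hz)
  have hp2 : p = 2 := (Nat.prime_dvd_prime_iff_eq hp Nat.prime_two).mp (hp.dvd_of_dvd_pow hdvd)
  exact hodd.ne_two_of_dvd_nat dvd_rfl hp2

theorem stmt6 {p l n : ℕ} (hp : p.Prime) (hodd : Odd p) (hl : 1 ≤ l) (hn : 1 ≤ n) :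
    ¬ ∃ f : (Fin n → ZMod 2) → ZMod (p ^ l), IsGBF f :=
  stmt6_general hp hodd hn
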